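/- Let d be a positive integer, let a, b be integers with 1 ≤ a ≤ b and a + b ≤ d, and let a', b' be integers with 1 ≤ a' ≤ b' and a' + b' ≤ d. If (a,b) ≠ (a',b'), then O^{(d)}_{a,b} ∩ O^{(d)}_{a',b'} = ∅. -/

import Mathlib

open scoped BigOperators

noncomputable def uvec {d : ℕ} (A : Finset (Fin d)) (ε : Fin d → ℝ) :
    EuclideanSpace ℝ (Fin d) :=
  (Real.sqrt A.card)⁻¹ • ∑ i ∈ A, ε i • (EuclideanSpace.single i (1 : ℝ))

def IsSign {d : ℕ} (A : Finset (Fin d)) (ε : Fin d → ℝ) : Prop :=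
  ∀ i, if i ∈ A then (ε i = 1 ∨ ε i = -1) else ε i = 1

def IsIndex (d a b : ℕ) (A B : Finset (Fin d)) (ε δ : Fin d → ℝ) : Prop :=
  Disjoint A B ∧ A.card = a ∧ B.card = b ∧ IsSign A ε ∧ IsSign B δ

noncomputable def Wspan {d : ℕ} (A B : Finset (Fin d)) (ε δ : Fin d → ℝ) :
    Submodule ℝ (EuclideanSpace ℝ (Fin d)) :=
  Submodule.span ℝ {uvec A ε, uvec B δ}

def orbitSet (d a b : ℕ) : Set (Submodule ℝ (EuclideanSpace ℝ (Fin d))) :=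
  {W | ∃ A B ε δ, IsIndex d a b A B ε δ ∧ W = Wspan A B ε δ}

/-! The support of `uvec C η` is `C`, while a combination `s • uvec A ε + t • uvec B δ` with
disjoint `A`, `B` has support `A`, `B`, `A ∪ B` or `∅` according to which of `s`, `t` vanish.
So if `Wspan A B ε δ = Wspan A' B' ε' δ'`, each of the disjoint nonempty sets `A'`, `B'` is one of
`A`, `B`, `A ∪ B`, which forces `{A', B'} = {A, B}` and hence `{a', b'} = {a, b}`. -/

variable {d : ℕ}

lemma IsSign.ne_zero {A : Finset (Fin d)} {ε : Fin d → ℝ} (hε : IsSign A ε) {i : Fin d}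
    (hi : i ∈ A) : ε i ≠ 0 := by
  have := hε i
  rw [if_pos hi] at this
  rcases this with h | h <;> norm_num [h]

lemma uvec_apply (A : Finset (Fin d)) (ε : Fin d → ℝ) (i : Fin d) :
    uvec A ε i = (Real.sqrt A.card)⁻¹ * (if i ∈ A then ε i else 0) := by
  simp [uvec, WithLp.ofLp_sum, Finset.sum_apply, Pi.single_apply]

lemma uvec_apply_eq_zero_iff {A : Finset (Fin d)} {ε : Fin d → ℝ} (hε : IsSign A ε)
    (i : Fin d) : uvec A ε i = 0 ↔ i ∉ A := by
  rw [uvec_apply]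
  by_cases hi : i ∈ A
  · have hcard : (0 : ℝ) < A.card := by exact_mod_cast Finset.card_pos.mpr ⟨i, hi⟩
    simp [hi, hε.ne_zero hi, hcard.ne']
  · simp [hi]

lemma uvec_apply_ne_zero_iff {A : Finset (Fin d)} {ε : Fin d → ℝ} (hε : IsSign A ε)
    (i : Fin d) : uvec A ε i ≠ 0 ↔ i ∈ A := by
  rw [ne_eq, uvec_apply_eq_zero_iff hε, not_not]

lemma eq_or_eq_or_eq_union_of_uvec_mem_Wspan {A B C : Finset (Fin d)} {ε δ η : Fin d → ℝ}
    (hAB : Disjoint A B) (hε : IsSign A ε) (hδ : IsSign B δ) (hη : IsSign C η)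
    (hC : C.Nonempty) (hmem : uvec C η ∈ Wspan A B ε δ) :
    C = A ∨ C = B ∨ C = A ∪ B := by
  obtain ⟨s, t, hst⟩ := Submodule.mem_span_pair.mp hmem
  have hsupp : ∀ i, i ∈ C ↔ (s ≠ 0 ∧ i ∈ A) ∨ (t ≠ 0 ∧ i ∈ B) := by
    intro i
    have hcoord : uvec C η i = s * uvec A ε i + t * uvec B δ i := by rw [← hst]; rfl
    rw [← uvec_apply_ne_zero_iff hη, hcoord, ← uvec_apply_ne_zero_iff hε,
      ← uvec_apply_ne_zero_iff hδ]
    by_cases hiA : i ∈ A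
    · have hiB : i ∉ B := Finset.disjoint_left.mp hAB hiA
      rw [(uvec_apply_eq_zero_iff hδ i).mpr hiB]
      simp
    · rw [(uvec_apply_eq_zero_iff hε i).mpr hiA]
      simp
  by_cases hs : s = 0 <;> by_cases ht : t = 0
  · obtain ⟨i, hi⟩ := hC
    exact absurd ((hsupp i).mp hi) (by simp [hs, ht])
  · exact Or.inr (Or.inl (by ext i; simp [hsupp i, hs, ht]))
  · exact Or.inl (by ext i; simp [hsupp i, hs, ht])
  · exact Or.inr (Or.inr (by ext i; simp [hsupp i, hs, ht]))

lemma eq_and_eq_or_eq_and_eq_of_Wspan_eq {A B A' B' : Finset (Fin d)} {ε δ ε' δ' : Fin d → ℝ}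
    (hAB : Disjoint A B) (hε : IsSign A ε) (hδ : IsSign B δ) (hA : A.Nonempty) (hB : B.Nonempty)
    (hAB' : Disjoint A' B') (hε' : IsSign A' ε') (hδ' : IsSign B' δ') (hA' : A'.Nonempty)
    (hB' : B'.Nonempty) (hW : Wspan A' B' ε' δ' = Wspan A B ε δ) :
    (A' = A ∧ B' = B) ∨ (A' = B ∧ B' = A) := by
  have hmemA : uvec A' ε' ∈ Wspan A B ε δ :=
    hW ▸ Submodule.subset_span (Set.mem_insert _ _)
  have hmemB : uvec B' δ' ∈ Wspan A B ε δ :=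
    hW ▸ Submodule.subset_span (Set.mem_insert_of_mem _ rfl)
  rcases eq_or_eq_or_eq_union_of_uvec_mem_Wspan hAB hε hδ hε' hA' hmemA with rfl | rfl | rfl <;>
  rcases eq_or_eq_or_eq_union_of_uvec_mem_Wspan hAB hε hδ hδ' hB' hmemB with rfl | rfl | rfl <;>
  simp_all [Finset.disjoint_union_left, Finset.disjoint_union_right, hA.ne_empty, hB.ne_empty]

theorem stmt8_general (d a b a' b' : ℕ)
    (ha : 1 ≤ a) (hab : a ≤ b)
    (ha' : 1 ≤ a') (hab' : a' ≤ b')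
    (hne : (a, b) ≠ (a', b')) :
    orbitSet d a b ∩ orbitSet d a' b' = ∅ := by
  refine Set.eq_empty_of_forall_notMem fun W ⟨hW, hW'⟩ => ?_
  obtain ⟨A, B, ε, δ, ⟨hAB, rfl, rfl, hε, hδ⟩, rfl⟩ := hW
  obtain ⟨A', B', ε', δ', ⟨hAB', rfl, rfl, hε', hδ'⟩, hW⟩ := hW'
  have hA := Finset.card_pos.mp ha
  have hB := Finset.card_pos.mp (ha.trans hab)
  have hA' := Finset.card_pos.mp ha'
  have hB' := Finset.card_pos.mp (ha'.trans hab')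
  rcases eq_and_eq_or_eq_and_eq_of_Wspan_eq hAB hε hδ hA hB hAB' hε' hδ' hA' hB' hW.symm with
    ⟨rfl, rfl⟩ | ⟨rfl, rfl⟩
  · exact hne rfl
  · exact hne (Prod.ext (le_antisymm hab hab') (le_antisymm hab' hab))

/-- orbits with distinct parameter pairs are disjoint:
if `(a,b) ≠ (a',b')` (with `1 ≤ a ≤ b`, `a+b ≤ d`, `1 ≤ a' ≤ b'`, `a'+b' ≤ d`),
then `O^{(d)}_{a,b} ∩ O^{(d)}_{a',b'} = ∅`. -/
theorem stmt8 (d a b a' b' : ℕ) (hd : 0 < d)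
    (ha : 1 ≤ a) (hab : a ≤ b) (habd : a + b ≤ d)
    (ha' : 1 ≤ a') (hab' : a' ≤ b') (habd' : a' + b' ≤ d)
    (hne : (a, b) ≠ (a', b')) :
    orbitSet d a b ∩ orbitSet d a' b' = ∅ :=
  stmt8_general d a b a' b' ha hab ha' hab' hne
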